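/- Let g be a convex distortion function, set α_j = g(j/n) for j = 0,…,n, and let j ∈ {0,…,n−2} and α ∈ [α_j, α_{j+1}] with α < 1. Then for every x ∈ ℝⁿ, the scaled generalized-ES norm equals the ordered weighted sum ⟨⟨x⟩⟩_α^{S,g} = ((α_{j+1}−α)/(1−α)) |x|_(j+1) + (1/(1−α)) Σ_{i=j+2}^n (α_i − α_{i−1}) |x|_(i); i.e., it is the OWL norm Ω_w with weights w_1 = … = w_j = 0, w_{j+1} = (α_{j+1}−α)/(1−α), and w_i = (α_i − α_{i−1})/(1−α) for i = j+2,…,n. -/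
import Mathlib


open Finset

/-- The absolute values of the components of `x`, arranged in increasing order:
`absSorted x i` is `|x|_(i+1)` in the paper's notation. -/
noncomputable def absSorted {n : ℕ} (x : Fin n → ℝ) : Fin n → ℝ :=
  fun i => |x (Tuple.sort (fun j => |x j|) i)|

/-- `coeff n g i = g((i+1)/n) - g(i/n)`, the paper's `c_{i+1}`. -/
noncomputable def coeff (n : ℕ) (g : ℝ → ℝ) (i : Fin n) : ℝ :=
  g (((i : ℕ) + 1 : ℝ) / n) - g (((i : ℕ) : ℝ) / n)

/-- The objective function whose infimum over `t` defines the scaled generalized-ES norm. -/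
noncomputable def sgesObj {n : ℕ} (g : ℝ → ℝ) (α : ℝ) (x : Fin n → ℝ) (t : ℝ) : ℝ :=
  t + (1 - α)⁻¹ * ∑ i, coeff n g i * max (absSorted x i - t) 0

/-- The scaled generalized-ES norm `⟨⟨x⟩⟩_α^{S,g}`. -/
noncomputable def sges {n : ℕ} (g : ℝ → ℝ) (α : ℝ) (x : Fin n → ℝ) : ℝ :=
  ⨅ t : ℝ, sgesObj g α x t

/-- The non-scaled generalized-ES norm `⟨⟨x⟩⟩_α^{g} = n(1-α)⟨⟨x⟩⟩_α^{S,g}`. -/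
noncomputable def nges {n : ℕ} (g : ℝ → ℝ) (α : ℝ) (x : Fin n → ℝ) : ℝ :=
  (n : ℝ) * (1 - α) * sges g α x

/-- The dual norm of a (norm) functional `N` on `ℝⁿ`. -/
noncomputable def dualNorm {n : ℕ} (N : (Fin n → ℝ) → ℝ) (y : Fin n → ℝ) : ℝ :=
  sSup {r : ℝ | ∃ x : Fin n → ℝ, N x ≤ 1 ∧ r = ∑ i, x i * y i}

/-- The ordered weighted L1 (OWL) norm. -/
noncomputable def owl {n : ℕ} (w : Fin n → ℝ) (x : Fin n → ℝ) : ℝ :=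
  ∑ i, w i * absSorted x i

lemma absSorted_mono {n : ℕ} (x : Fin n → ℝ) : Monotone (absSorted x) :=
  Tuple.monotone_sort (fun j => |x j|)

lemma coeff_nonneg {n : ℕ} (g : ℝ → ℝ) (hg : MonotoneOn g (Set.Icc 0 1)) (i : Fin n) :
    0 ≤ coeff n g i := by
  have hn : (0:ℝ) < n := by exact_mod_cast i.pos
  have hi : ((i:ℕ):ℝ) + 1 ≤ n := by exact_mod_cast i.2
  have h1 : ((i:ℕ):ℝ) / n ∈ Set.Icc (0:ℝ) 1 := by
    constructor
    · positivity
    · rw [div_le_one hn]; linarith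
  have h2 : (((i:ℕ):ℝ) + 1) / n ∈ Set.Icc (0:ℝ) 1 := by
    constructor
    · positivity
    · rw [div_le_one hn]; linarith
  refine sub_nonneg.2 (hg h1 h2 ?_)
  gcongr
  linarith

lemma tele_sum {n : ℕ} (g : ℝ → ℝ) (k : ℕ) (hk : k ≤ n) :
    ∑ i ∈ Finset.univ.filter (fun i : Fin n => k ≤ (i : ℕ)), coeff n g i
      = g ((n:ℝ)/n) - g ((k:ℝ)/n) := by
  set F : ℕ → ℝ := fun i => g ((i:ℝ)/n) with hF
  set h : ℕ → ℝ := fun i => if k ≤ i then F (i+1) - F i else 0 with hh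
  have h1 : ∑ i ∈ Finset.univ.filter (fun i : Fin n => k ≤ (i : ℕ)), coeff n g i
      = ∑ i ∈ Finset.Ico k n, (F (i+1) - F i) := by
    rw [Finset.sum_filter]
    have e1 : ∀ i : Fin n, (if k ≤ (i:ℕ) then coeff n g i else 0) = h (i:ℕ) := by
      intro i
      simp only [hh, hF, coeff]
      by_cases hki : k ≤ (i:ℕ) <;> simp [hki]
    rw [Finset.sum_congr rfl (fun i _ => e1 i), Fin.sum_univ_eq_sum_range h]
    have e2 : Finset.Ico k n = (Finset.range n).filter (fun i => k ≤ i) := by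
      ext i; simp [Finset.mem_Ico]; omega
    rw [e2, Finset.sum_filter]
  rw [h1, Finset.sum_Ico_eq_sub _ hk, Finset.sum_range_sub F, Finset.sum_range_sub F]
  simp [hF]

lemma max_shift (y s t : ℝ) (hst : s ≤ t) : max (y - s) 0 ≤ max (y - t) 0 + (t - s) := by
  rcases le_total y t with h | h
  · have : max (y - s) 0 ≤ t - s := by
      apply max_le (by linarith) (by linarith)
    nlinarith [le_max_right (y - t) (0:ℝ)]
  · rw [max_eq_left (by linarith), max_eq_left (by linarith)]; linarith


/-- for a convex distortion function and `α ∈ [α_j, α_{j+1}]`,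
`j = 0,…,n-2`, `α < 1`, the scaled generalized-ES norm is the OWL norm
`((α_{j+1}-α)/(1-α)) |x|₍ⱼ₊₁₎ + (1/(1-α)) ∑_{i=j+2}^n (αᵢ-αᵢ₋₁)|x|₍ᵢ₎`
(the paper's 1-based index `i ∈ {j+2,…,n}` is the 0-based index `i ∈ {j+1,…,n-1}`,
and the paper's `|x|₍ⱼ₊₁₎` is `absSorted x ⟨j, _⟩`). -/
theorem stmt16 (n : ℕ) (hn : 1 ≤ n) (g : ℝ → ℝ)
    (hg_mono : MonotoneOn g (Set.Icc 0 1)) (hg_conv : ConvexOn ℝ (Set.Icc 0 1) g)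
    (hg0 : g 0 = 0) (hg1 : g 1 = 1)
    (j : ℕ) (hj : j + 2 ≤ n) (α : ℝ)
    (hα1 : g ((j : ℝ) / n) ≤ α) (hα2 : α ≤ g (((j : ℝ) + 1) / n)) (hα3 : α < 1)
    (x : Fin n → ℝ) :
    sges g α x
      = (g (((j : ℝ) + 1) / n) - α) / (1 - α) * absSorted x ⟨j, by omega⟩
        + (1 - α)⁻¹ *
            ∑ i ∈ Finset.univ.filter (fun i : Fin n => j + 1 ≤ (i : ℕ)),
              coeff n g i * absSorted x i := by

  have hn0 : (0:ℝ) < n := by positivity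
  have hβ : (0:ℝ) < 1 - α := by linarith
  set K : ℝ := (1 - α)⁻¹ with hK
  have hKpos : 0 < K := by positivity
  set a : Fin n → ℝ := absSorted x with ha
  have hamono : Monotone a := absSorted_mono x
  set jf : Fin n := ⟨j, by omega⟩ with hjf
  set s : ℝ := a jf with hs
  have hc : ∀ i : Fin n, 0 ≤ coeff n g i := coeff_nonneg g hg_mono
  -- telescoping sums
  have hTop : g ((n:ℝ)/n) = 1 := by rw [div_self hn0.ne']; exact hg1
  have hA1 : ∑ i ∈ Finset.univ.filter (fun i : Fin n => j + 1 ≤ (i : ℕ)), coeff n g i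
      = 1 - g (((j:ℝ) + 1)/n) := by
    have := tele_sum (n := n) g (j+1) (by omega)
    rw [hTop] at this; push_cast at this; exact this
  have hA0 : ∑ i ∈ Finset.univ.filter (fun i : Fin n => j ≤ (i : ℕ)), coeff n g i
      = 1 - g ((j:ℝ)/n) := by
    have := tele_sum (n := n) g j (by omega)
    rw [hTop] at this; exact this
  -- the minimizer property
  have hmin : ∀ t : ℝ, sgesObj g α x s ≤ sgesObj g α x t := by
    intro t
    simp only [sgesObj, ← ha, ← hK]
    rcases le_total s t with hst | hst
    · -- case s ≤ t
      have key : ∑ i, coeff n g i * max (a i - s) 0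
          ≤ ∑ i, coeff n g i * max (a i - t) 0 + (1 - g (((j:ℝ)+1)/n)) * (t - s) := by
        have term : ∀ i : Fin n, coeff n g i * max (a i - s) 0
            ≤ coeff n g i * max (a i - t) 0
              + (if j + 1 ≤ (i:ℕ) then coeff n g i * (t - s) else 0) := by
          intro i
          by_cases hij : j + 1 ≤ (i:ℕ)
          · simp only [hij, if_true]
            have := max_shift (a i) s t hst
            nlinarith [hc i]
          · simp only [hij, if_false]
            have hile : a i ≤ s := hamono (show i ≤ jf by
              rw [hjf, Fin.le_def]; simp; omega)
            have : max (a i - s) 0 = 0 := max_eq_right (by linarith)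
            rw [this]
            have : 0 ≤ max (a i - t) 0 := le_max_right _ _
            nlinarith [hc i]
        calc ∑ i, coeff n g i * max (a i - s) 0
            ≤ ∑ i, (coeff n g i * max (a i - t) 0
              + (if j + 1 ≤ (i:ℕ) then coeff n g i * (t - s) else 0)) :=
              Finset.sum_le_sum (fun i _ => term i)
          _ = ∑ i, coeff n g i * max (a i - t) 0 + (1 - g (((j:ℝ)+1)/n)) * (t - s) := by
              rw [Finset.sum_add_distrib, ← Finset.sum_filter, ← Finset.sum_mul, hA1]
      have H : (1 - α) * s + ∑ i, coeff n g i * max (a i - s) 0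
          ≤ (1 - α) * t + ∑ i, coeff n g i * max (a i - t) 0 := by
        nlinarith
      have := mul_le_mul_of_nonneg_left H (le_of_lt hKpos)
      have hKβ : K * (1 - α) = 1 := inv_mul_cancel₀ hβ.ne'
      nlinarith
    · -- case t ≤ s
      have key : ∑ i, coeff n g i * max (a i - s) 0 + (1 - g ((j:ℝ)/n)) * (s - t)
          ≤ ∑ i, coeff n g i * max (a i - t) 0 := by
        have term : ∀ i : Fin n, coeff n g i * max (a i - s) 0
              + (if j ≤ (i:ℕ) then coeff n g i * (s - t) else 0)
            ≤ coeff n g i * max (a i - t) 0 := by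
          intro i
          by_cases hij : j ≤ (i:ℕ)
          · simp only [hij, if_true]
            have hge : s ≤ a i := hamono (show jf ≤ i by
              rw [hjf, Fin.le_def]; simpa)
            rw [max_eq_left (by linarith), max_eq_left (by linarith)]
            nlinarith [hc i]
          · simp only [hij, if_false]
            have : max (a i - s) 0 ≤ max (a i - t) 0 :=
              max_le_max (by linarith) le_rfl
            nlinarith [hc i]
        calc ∑ i, coeff n g i * max (a i - s) 0 + (1 - g ((j:ℝ)/n)) * (s - t)
            = ∑ i, (coeff n g i * max (a i - s) 0
              + (if j ≤ (i:ℕ) then coeff n g i * (s - t) else 0)) := by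
              rw [Finset.sum_add_distrib, ← Finset.sum_filter, ← Finset.sum_mul, hA0]
          _ ≤ ∑ i, coeff n g i * max (a i - t) 0 :=
              Finset.sum_le_sum (fun i _ => term i)
      have H : (1 - α) * s + ∑ i, coeff n g i * max (a i - s) 0
          ≤ (1 - α) * t + ∑ i, coeff n g i * max (a i - t) 0 := by
        nlinarith
      have := mul_le_mul_of_nonneg_left H (le_of_lt hKpos)
      have hKβ : K * (1 - α) = 1 := inv_mul_cancel₀ hβ.ne'
      nlinarith
  -- infimum attained at s
  have hbdd : BddBelow (Set.range (sgesObj g α x)) :=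
    ⟨sgesObj g α x s, by rintro _ ⟨t, rfl⟩; exact hmin t⟩
  have hval : sges g α x = sgesObj g α x s :=
    le_antisymm (ciInf_le hbdd s) (le_ciInf hmin)
  -- compute the value at s
  rw [hval]
  simp only [sgesObj, ← ha, ← hK]
  have hsum : ∑ i, coeff n g i * max (a i - s) 0
      = ∑ i ∈ Finset.univ.filter (fun i : Fin n => j + 1 ≤ (i : ℕ)),
          coeff n g i * (a i - s) := by
    rw [Finset.sum_filter]
    apply Finset.sum_congr rfl
    intro i _
    by_cases hij : j + 1 ≤ (i:ℕ)
    · have hge : s ≤ a i := hamono (show jf ≤ i by rw [hjf, Fin.le_def]; simp; omega)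
      simp [hij, max_eq_left (by linarith : (0:ℝ) ≤ a i - s)]
    · have hile : a i ≤ s := hamono (show i ≤ jf by rw [hjf, Fin.le_def]; simp; omega)
      have : max (a i - s) 0 = 0 := max_eq_right (by linarith)
      simp [hij, this]
  rw [hsum]
  have hexp : ∑ i ∈ Finset.univ.filter (fun i : Fin n => j + 1 ≤ (i : ℕ)),
        coeff n g i * (a i - s)
      = (∑ i ∈ Finset.univ.filter (fun i : Fin n => j + 1 ≤ (i : ℕ)),
          coeff n g i * a i) - (1 - g (((j:ℝ)+1)/n)) * s := by
    rw [← hA1, Finset.sum_mul]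
    rw [← Finset.sum_sub_distrib]
    apply Finset.sum_congr rfl
    intro i _; ring
  rw [hexp]
  have hKβ : K * (1 - α) = 1 := inv_mul_cancel₀ hβ.ne'
  rw [div_eq_mul_inv (g (((j:ℝ)+1)/n) - α) (1-α), ← hK]
  linear_combination (-s) * hKβ
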